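/- arXiv:1904.04903 — 3 statements merged into one kernel-verified Lean document; each statement's English description precedes it below -/
import Mathlib

section
/- Lagrange inversion for the tree generating function: the formal power series y(x) = Σ_{k≥1} k^{k-1} x^k / k! satisfies y(x)·e^{-y(x)} = x as formal power series. -/
/-!
Write `y = X * Y` with `Y = ∑ₖ (k+1)^(k-1) x^k / k!`. Abel's identity
`∑ₖ C(n,k) (k+1)^(k-1) (n-k)^(n-k) = (n+1)^n` is the coefficient form of `Y * (1 + X y') = y'`,
i.e. of the differential equation `y = X y' (1 - y)`.
For `E = exp (-y)` we have `E' = -y' E`, so this equation says that `y E` is fixed by the Euler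
operator `X d/dX`. The only such power series are the multiples of `X`, and the coefficient of `X`
in `y E` is `1`.
-/

open PowerSeries

/-- Formal composition `f ∘ g` of power series, valid when `g` has zero
constant term: the `n`-th coefficient only depends on `∑_{k ≤ n} f_k g^k`. -/
noncomputable def psComp (f g : PowerSeries ℚ) : PowerSeries ℚ :=
  PowerSeries.mk fun n =>
    PowerSeries.coeff n (∑ k ∈ Finset.range (n + 1), PowerSeries.coeff k f • g ^ k)

open Finset Nat

theorem sum_alternating_choose_mul_pow_eq_zero {R : Type*} [CommRing R] {m n : ℕ} (h : m < n)
    (a : R) : ∑ k ∈ range (n + 1), (-1) ^ (n - k) * n.choose k * (a + k) ^ m = 0 := by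
  have := fwdDiff_iter_eq_sum_shift (1 : R) (· ^ m) n a
  rw [fwdDiff_iter_pow_eq_zero_of_lt h] at this
  simpa [zsmul_eq_mul] using this.symm

theorem Nat.choose_mul_choose_sub_comm (n k j : ℕ) :
    n.choose k * (n - k).choose j = n.choose j * (n - j).choose k := by
  have hk := Nat.choose_mul (n := n) (Nat.le_add_right k j)
  have hj := Nat.choose_mul (n := n) (Nat.le_add_left j k)
  rw [Nat.add_sub_cancel_left] at hk
  rw [Nat.add_sub_cancel] at hj
  rw [← hk, ← hj, Nat.choose_symm_add]

/-- Abel's identity. At `k = 0` the truncated exponent `k - 1 = 0` is harmless since the base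
is `1`. -/
theorem abel_identity {R : Type*} [CommRing R] (n : ℕ) (w : R) :
    ∑ k ∈ range (n + 1), n.choose k * (k + 1 : R) ^ (k - 1) * (w - (k + 1)) ^ (n - k) = w ^ n := by
  -- the coefficient of `w ^ j` is an `(n - j)`-th finite difference of a polynomial of degree
  -- `n - j - 1`
  have inner (j : ℕ) (hj : j ∈ range (n + 1)) :
      ∑ k ∈ range (n - j + 1), (-1) ^ (n - j - k) * (n - j).choose k * (1 + k : R) ^ (n - j - 1)
        = if j = n then 1 else 0 := by
    split_ifs with hjn
    · simp [hjn]
    · exact sum_alternating_choose_mul_pow_eq_zero (by simp at hj; omega) 1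
  calc _ = ∑ k ∈ range (n + 1), ∑ j ∈ range (n - k + 1), w ^ j * n.choose j *
        ((-1) ^ (n - j - k) * (n - j).choose k * (1 + k : R) ^ (n - j - 1)) := by
        refine sum_congr rfl fun k hk => ?_
        rw [sub_pow, mul_sum]
        refine sum_congr rfl fun j hj => ?_
        simp only [mem_range] at hk hj
        have hc : (n.choose k * (n - k).choose j : R) = n.choose j * (n - j).choose k := by
          rw [← Nat.cast_mul, ← Nat.cast_mul, Nat.choose_mul_choose_sub_comm]
        have hp : (k + 1 : R) ^ (k - 1) * (k + 1) ^ (n - k - j) = (1 + k) ^ (n - j - 1) := by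
          rcases k with _ | k
          · simp
          · rw [← pow_add, add_comm (1 : R)]; congr 1; omega
        have hs : (-1 : R) ^ (j + (n - k)) = (-1) ^ (n - j - k) := by
          rw [show j + (n - k) = n - j - k + 2 * j by omega, pow_add, pow_mul]; simp
        linear_combination
          ((k + 1 : R) ^ (k - 1) * (k + 1) ^ (n - k - j) * (-1) ^ (j + (n - k)) * w ^ j) * hc
          + (n.choose j * (n - j).choose k * (-1) ^ (j + (n - k)) * w ^ j : R) * hp
          + (n.choose j * (n - j).choose k * (1 + k : R) ^ (n - j - 1) * w ^ j) * hs
    _ = ∑ j ∈ range (n + 1), ∑ k ∈ range (n - j + 1), w ^ j * n.choose j *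
        ((-1) ^ (n - j - k) * (n - j).choose k * (1 + k : R) ^ (n - j - 1)) :=
        sum_comm' fun k j => by simp only [mem_range]; omega
    _ = w ^ n := by
      rw [sum_congr rfl fun j hj => by rw [← mul_sum, inner j hj]]
      simp

theorem psComp_eq_subst {f g : ℚ⟦X⟧} (hg : constantCoeff g = 0) : psComp f g = f.subst g := by
  ext n
  have hsupp : Function.support (fun d => coeff d f • coeff n (g ^ d)) ⊆ ↑(range (n + 1)) := by
    intro d hd
    contrapose! hd
    have hdvd : X ^ d ∣ g ^ d := pow_dvd_pow_of_dvd (X_dvd_iff.mpr hg) d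
    simp only [coe_range, Set.mem_Iio, not_lt] at hd
    simp [X_pow_dvd_iff.mp hdvd n (by omega)]
  rw [psComp, coeff_mk, coeff_subst' (HasSubst.of_constantCoeff_zero' hg),
    finsum_eq_sum_of_support_subset _ hsupp, map_sum]
  simp_rw [LinearMap.map_smul_of_tower]

theorem constantCoeff_psComp (f g : ℚ⟦X⟧) : constantCoeff (psComp f g) = constantCoeff f := by
  rw [← coeff_zero_eq_constantCoeff_apply, psComp, coeff_mk]
  simp

theorem derivative_psComp_exp {g : ℚ⟦X⟧} (hg : constantCoeff g = 0) :
    d⁄dX ℚ (psComp (exp ℚ) g) = psComp (exp ℚ) g * d⁄dX ℚ g := by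
  rw [psComp_eq_subst hg, derivative_subst (HasSubst.of_constantCoeff_zero' hg), derivative_exp]

theorem coeff_X_mul_derivative {R : Type*} [CommSemiring R] (f : R⟦X⟧) (n : ℕ) :
    coeff n (X * d⁄dX R f) = n * coeff n f := by
  rcases n with _ | n
  · simp
  · rw [coeff_succ_X_mul, coeff_derivative, mul_comm]
    push_cast
    rfl

theorem eq_C_mul_X_of_X_mul_derivative_eq {R : Type*} [CommRing R] [IsAddTorsionFree R]
    {f : R⟦X⟧} (h : X * d⁄dX R f = f) : f = C (coeff 1 f) * X := by
  ext n
  have hn := congrArg (coeff n) h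
  rw [coeff_X_mul_derivative] at hn
  rw [← pow_one X, coeff_C_mul_X_pow]
  split_ifs with h1
  · rw [h1]
  · have h2 : (n - 1 : ℤ) • coeff n f = 0 := by
      rw [sub_smul, one_smul, natCast_zsmul, nsmul_eq_mul, hn, sub_self]
    refine (smul_eq_zero.mp h2).resolve_left ?_
    omega

noncomputable def treeFunction : ℚ⟦X⟧ :=
  mk fun k => if k = 0 then 0 else (k : ℚ) ^ (k - 1) / k !

theorem treeFunction_eq_X_mul : treeFunction = X * mk fun k => (k + 1 : ℚ) ^ (k - 1) / k ! := by
  ext (_ | k)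
  · simp [treeFunction]
  · rw [coeff_succ_X_mul, treeFunction, coeff_mk, coeff_mk, if_neg k.succ_ne_zero, factorial_succ]
    rcases k with _ | k
    · simp
    · push_cast
      rw [pow_succ]
      field_simp

theorem derivative_treeFunction : d⁄dX ℚ treeFunction = mk fun n => (n + 1 : ℚ) ^ n / n ! := by
  ext n
  rw [coeff_derivative, treeFunction, coeff_mk, coeff_mk, if_neg n.succ_ne_zero, factorial_succ]
  push_cast
  field_simp

theorem one_add_X_mul_derivative_treeFunction :
    1 + X * d⁄dX ℚ treeFunction = mk fun m => (m : ℚ) ^ m / m ! := by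
  ext (_ | m)
  · simp
  · rw [map_add, coeff_X_mul_derivative, coeff_one, if_neg m.succ_ne_zero, treeFunction, coeff_mk,
      coeff_mk, if_neg m.succ_ne_zero]
    push_cast
    rw [pow_succ]
    ring

theorem treeFunction_eq_X_mul_derivative_mul_one_sub :
    treeFunction = X * d⁄dX ℚ treeFunction * (1 - treeFunction) := by
  have h : treeFunction * (1 + X * d⁄dX ℚ treeFunction) = X * d⁄dX ℚ treeFunction := by
    rw [one_add_X_mul_derivative_treeFunction, derivative_treeFunction, treeFunction_eq_X_mul,
      mul_assoc]
    congr 1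
    ext n
    rw [coeff_mul, Nat.sum_antidiagonal_eq_sum_range_succ_mk, coeff_mk,
      ← abel_identity n (n + 1 : ℚ), sum_div]
    refine sum_congr rfl fun i hi => ?_
    have hin : i ≤ n := by simpa [Nat.lt_succ_iff] using hi
    rw [coeff_mk, coeff_mk, Nat.cast_choose ℚ hin,
      show (n + 1 : ℚ) - (i + 1) = (n - i : ℕ) by push_cast [hin]; ring]
    field_simp
  linear_combination h

/-- The tree function `y = ∑_{k≥1} k^(k-1) x^k / k!` satisfies
`y e^(-y) = x` as formal power series. -/
theorem tree_function_lambert :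
    let y : PowerSeries ℚ :=
      PowerSeries.mk fun k => if k = 0 then 0 else (k : ℚ) ^ (k - 1) / k.factorial
    y * psComp (PowerSeries.exp ℚ) (-y) = PowerSeries.X := by
  intro y
  change treeFunction * psComp (exp ℚ) (-treeFunction) = X
  have hy : constantCoeff treeFunction = 0 := by simp [treeFunction_eq_X_mul]
  set E := psComp (exp ℚ) (-treeFunction)
  have hE : d⁄dX ℚ E = -(E * d⁄dX ℚ treeFunction) := by
    rw [derivative_psComp_exp (by simp [hy]), map_neg, mul_neg]
  have euler : X * d⁄dX ℚ (treeFunction * E) = treeFunction * E := by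
    rw [Derivation.leibniz, hE, smul_eq_mul, smul_eq_mul]
    linear_combination (-E) * treeFunction_eq_X_mul_derivative_mul_one_sub
  have hcoeff : coeff 1 (treeFunction * E) = 1 := by
    rw [treeFunction_eq_X_mul, mul_assoc, coeff_succ_X_mul, coeff_zero_eq_constantCoeff, map_mul,
      constantCoeff_psComp]
    simp
  rw [eq_C_mul_X_of_X_mul_derivative_eq euler, hcoeff, map_one, one_mul]
end

section
/- The Euler derivative identity (z₁ ∂/∂z₁ + z₂ ∂/∂z₂) log((z₁-z₂)/(x(z₁)-x(z₂))) = r·(x₁ z₁^r - x₂ z₂^r)/(x₁ - x₂), where x(z) = z·e^{-z^r} and xᵢ = x(zᵢ), holds wherever z₁ ≠ z₂ and x₁ ≠ x₂. -/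
/-!
For any holomorphic `f`, the logarithmic derivative of `(w - a) / (f w - f a)` is
`1 / (w - a) - f' w / (f w - f a)`, so the Euler operator `z₁ ∂₁ + z₂ ∂₂` sends
`log ((z₁ - z₂) / (f z₁ - f z₂))` to `1 - (z₁ f'(z₁) - z₂ f'(z₂)) / (f z₁ - f z₂)`.
For `f = x` the identity `z x'(z) = x(z) (1 - r z^r)` turns this into the claimed formula.
-/

/-- The `r`-Lambert parametrization `x(z) = z e^(-z^r)`. -/
noncomputable def xL (r : ℕ) (z : ℂ) : ℂ := z * Complex.exp (-z ^ r)

open Complex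

theorem hasDerivAt_log_div_sub {f : ℂ → ℂ} {f' a z : ℂ} (hf : HasDerivAt f f' z) (hz : z ≠ a)
    (hfz : f z ≠ f a) (hslit : (z - a) / (f z - f a) ∈ slitPlane) :
    HasDerivAt (fun w => log ((w - a) / (f w - f a))) (1 / (z - a) - f' / (f z - f a)) z := by
  have hquot := ((hasDerivAt_id' z).sub_const a).div (hf.sub_const (f a)) (sub_ne_zero.mpr hfz)
  refine (hquot.clog hslit).congr_deriv ?_
  have : z - a ≠ 0 := sub_ne_zero.mpr hz
  have : f z - f a ≠ 0 := sub_ne_zero.mpr hfz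
  simp only [Pi.div_apply]
  field_simp

theorem euler_log_div_sub {f : ℂ → ℂ} {f'₁ f'₂ z₁ z₂ : ℂ} (hf₁ : HasDerivAt f f'₁ z₁)
    (hf₂ : HasDerivAt f f'₂ z₂) (hz : z₁ ≠ z₂) (hfz : f z₁ ≠ f z₂)
    (hslit : (z₁ - z₂) / (f z₁ - f z₂) ∈ slitPlane) :
    z₁ * deriv (fun w => log ((w - z₂) / (f w - f z₂))) z₁ +
        z₂ * deriv (fun w => log ((z₁ - w) / (f z₁ - f w))) z₂ =
      1 - (z₁ * f'₁ - z₂ * f'₂) / (f z₁ - f z₂) := by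
  have hswap : (fun w => log ((z₁ - w) / (f z₁ - f w))) =
      fun w => log ((w - z₁) / (f w - f z₁)) := by
    funext w
    rw [← neg_sub w, ← neg_sub (f w), neg_div_neg_eq]
  have hslit' : (z₂ - z₁) / (f z₂ - f z₁) ∈ slitPlane := by
    rwa [← neg_sub z₁, ← neg_sub (f z₁), neg_div_neg_eq]
  rw [hswap, (hasDerivAt_log_div_sub hf₁ hz hfz hslit).deriv,
    (hasDerivAt_log_div_sub hf₂ hz.symm hfz.symm hslit').deriv]
  have : z₁ - z₂ ≠ 0 := sub_ne_zero.mpr hz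
  have : f z₁ - f z₂ ≠ 0 := sub_ne_zero.mpr hfz
  field_simp
  ring

theorem hasDerivAt_xL (r : ℕ) (z : ℂ) :
    HasDerivAt (xL r) (exp (-z ^ r) * (1 - r * z ^ r)) z := by
  refine ((hasDerivAt_id' z).mul (hasDerivAt_pow r z).neg.cexp).congr_deriv ?_
  rcases r with _ | n
  · simp
  · simp only [Pi.neg_apply, add_tsub_cancel_right, pow_succ' z n]
    push_cast
    ring

theorem self_mul_deriv_xL (r : ℕ) (z : ℂ) : z * deriv (xL r) z = xL r z * (1 - r * z ^ r) := by
  rw [(hasDerivAt_xL r z).deriv, xL]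
  ring

theorem euler_derivative_of_log_general (r : ℕ) (z₁ z₂ : ℂ) (hz : z₁ ≠ z₂)
    (hx : xL r z₁ ≠ xL r z₂)
    (hslit : (z₁ - z₂) / (xL r z₁ - xL r z₂) ∈ Complex.slitPlane) :
    z₁ * deriv (fun w => Complex.log ((w - z₂) / (xL r w - xL r z₂))) z₁ +
        z₂ * deriv (fun w => Complex.log ((z₁ - w) / (xL r z₁ - xL r w))) z₂ =
      (r : ℂ) * (xL r z₁ * z₁ ^ r - xL r z₂ * z₂ ^ r) / (xL r z₁ - xL r z₂) := by
  have hdiff (z : ℂ) : HasDerivAt (xL r) (deriv (xL r) z) z :=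
    (hasDerivAt_xL r z).differentiableAt.hasDerivAt
  rw [euler_log_div_sub (hdiff z₁) (hdiff z₂) hz hx hslit, self_mul_deriv_xL, self_mul_deriv_xL]
  have : xL r z₁ - xL r z₂ ≠ 0 := sub_ne_zero.mpr hx
  field_simp
  ring

/-- The Euler derivative identity
`(z₁ ∂₁ + z₂ ∂₂) log((z₁-z₂)/(x(z₁)-x(z₂))) = r (x₁ z₁^r - x₂ z₂^r)/(x₁ - x₂)`. -/
theorem euler_derivative_of_log (r : ℕ) (hr : 0 < r) (z₁ z₂ : ℂ) (hz : z₁ ≠ z₂)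
    (hx : xL r z₁ ≠ xL r z₂)
    (hslit : (z₁ - z₂) / (xL r z₁ - xL r z₂) ∈ Complex.slitPlane) :
    z₁ * deriv (fun w => Complex.log ((w - z₂) / (xL r w - xL r z₂))) z₁ +
        z₂ * deriv (fun w => Complex.log ((z₁ - w) / (xL r z₁ - xL r w))) z₂ =
      (r : ℂ) * (xL r z₁ * z₁ ^ r - xL r z₂ * z₂ ^ r) / (xL r z₁ - xL r z₂) :=
  euler_derivative_of_log_general r z₁ z₂ hz hx hslit
end

section
/- The genus-0 one-point orbifold Hurwitz numbers H_{0,1}^r(d) = d^{⌊d/r⌋ - 2}/⌊d/r⌋! (for r | d) satisfy the rescaled (0,1) cut-and-join recursion: (d/r - 1)·d·H_{0,1}^r(d) = (1/2)·d·Σ_{α+β=d, α,β≥1, r|α, r|β} α·β·H_{0,1}^r(α)·H_{0,1}^r(β), for all d divisible by r with d > r. -/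
/-!
Write `d = r m`. Only multiples of `r` contribute, and `(r a) H(r a) = (r a)^(a-1) / a!`, so
after clearing powers of `r` and factorials the recursion becomes the forest-counting identity
`∑_{0<a<m} C(m,a) a^(a-1) (m-a)^(m-a-1) = 2 (m-1) m^(m-2)`. Multiplying it by `m = a + (m-a)`
and using the symmetry `a ↔ m - a` reduces it to `∑_{0<k≤n} C(n,k) k^(k-1) (n-k)^(n-k) = n^n`,
the value at `y = 0` of the Abel-type identity
`∑_{0<k≤n} C(n,k) k^(k-1) (y+n-k)^(n-k) = n (y+n)^(n-1)`.
Both sides of the latter have derivative `n` times the case `n - 1` at `y + 1`, and they agree at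
`y = -n`, where the left side is an `n`-th finite difference of `k ↦ k^(n-1)`.
-/

open Finset Polynomial
open scoped Nat

/-- The genus-0 one-point orbifold Hurwitz numbers
`H⁰₀,₁(d) = d^(⌊d/r⌋-2)/⌊d/r⌋!` for `r ∣ d`, `d > 0`, and `0` otherwise. -/
noncomputable def H01 (r d : ℕ) : ℚ :=
  if r ∣ d ∧ 0 < d then (d : ℚ) ^ ((d / r : ℤ) - 2) / (d / r).factorial else 0

theorem Finset.sum_Ioo_reflect {M : Type*} [AddCommMonoid M] (f : ℕ → M) (n : ℕ) :
    ∑ k ∈ Ioo 0 n, f (n - k) = ∑ k ∈ Ioo 0 n, f k :=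
  sum_nbij' (n - ·) (n - ·) (by simp only [mem_Ioo]; omega) (by simp only [mem_Ioo]; omega)
    (by simp only [mem_Ioo]; omega) (by simp only [mem_Ioo]; omega) fun _ _ => rfl

theorem Finset.sum_Ioo_mul_left_eq_of_not_dvd {M : Type*} [AddCommMonoid M] {r : ℕ} (hr : 0 < r)
    (m : ℕ) {f : ℕ → M} (hf : ∀ α, ¬ r ∣ α → f α = 0) :
    ∑ α ∈ Ioo 0 (r * m), f α = ∑ a ∈ Ioo 0 m, f (r * a) := by
  rw [← sum_image fun a _ b _ h => Nat.eq_of_mul_eq_mul_left hr h]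
  refine (sum_subset ?_ fun α hα hα' => hf α ?_).symm
  · intro α hα
    obtain ⟨a, ha, rfl⟩ := mem_image.1 hα
    obtain ⟨ha0, ham⟩ := mem_Ioo.1 ha
    exact mem_Ioo.2 ⟨Nat.mul_pos hr ha0, Nat.mul_lt_mul_of_pos_left ham hr⟩
  · rintro ⟨a, rfl⟩
    obtain ⟨ha0, ham⟩ := mem_Ioo.1 hα
    exact hα' (mem_image.2 ⟨a, mem_Ioo.2 ⟨Nat.pos_of_mul_pos_left ha0,
      Nat.lt_of_mul_lt_mul_left ham⟩, rfl⟩)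

section Abel

variable {R : Type*} [CommRing R]

theorem Polynomial.eq_of_derivative_eq_of_eval_eq [IsAddTorsionFree R] {p q : R[X]} (a : R)
    (hd : derivative p = derivative q) (he : p.eval a = q.eval a) : p = q := by
  have hc := eq_C_of_derivative_eq_zero (p := p - q) (by rw [derivative_sub, hd, sub_self])
  have h0 : (p - q).coeff 0 = 0 := by
    simpa [he] using (congrArg (eval a) hc).symm
  rwa [h0, C_0, sub_eq_zero] at hc

theorem sum_range_neg_one_pow_mul_choose_mul_pow_eq_zero {n j : ℕ} (h : j < n) :
    ∑ k ∈ range (n + 1), (-1 : R) ^ (n - k) * n.choose k * (k : R) ^ j = 0 := by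
  have := congrFun (fwdDiff_iter_pow_eq_zero_of_lt (R := R) h) 0
  rw [fwdDiff_iter_eq_sum_shift] at this
  simpa [zsmul_eq_mul] using this

noncomputable def abelSum (n : ℕ) : R[X] :=
  ∑ k ∈ Ioc 0 n, C ((n.choose k : R) * k ^ (k - 1)) * (X + C ((n - k : ℕ) : R)) ^ (n - k)

theorem derivative_abelSum_succ (n : ℕ) :
    derivative (abelSum (n + 1) : R[X]) = C ((n + 1 : ℕ) : R) * (abelSum n).comp (X + 1) := by
  rw [abelSum, abelSum, sum_Ioc_succ_top n.zero_le, derivative_add, Nat.sub_self, pow_zero,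
    mul_one, derivative_C, add_zero, derivative_sum, Polynomial.sum_comp, mul_sum]
  refine sum_congr rfl fun k hk => ?_
  have hkn : k ≤ n := (mem_Ioc.1 hk).2
  have hsub : n + 1 - k = n - k + 1 := by omega
  have hchoose := congrArg (Nat.cast : ℕ → R[X]) (Nat.choose_mul_succ_eq n k)
  rw [hsub] at hchoose
  push_cast at hchoose
  rw [hsub, derivative_C_mul, derivative_X_add_C_pow, Nat.add_sub_cancel, mul_comp,
    C_comp, pow_comp, add_comp, X_comp, C_comp]
  simp only [map_mul, map_pow, map_natCast, Nat.cast_succ, map_add, map_one]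
  linear_combination -(X + 1 + ((n - k : ℕ) : R[X])) ^ (n - k) * (k : R[X]) ^ (k - 1) * hchoose

theorem eval_neg_abelSum {n : ℕ} (hn : 2 ≤ n) : (abelSum n : R[X]).eval (-(n : R)) = 0 := by
  have hterm : ∀ k ∈ Ioc 0 n, eval (-(n : R)) (C ((n.choose k : R) * k ^ (k - 1)) *
      (X + C ((n - k : ℕ) : R)) ^ (n - k)) = (-1) ^ (n - k) * n.choose k * (k : R) ^ (n - 1) := by
    intro k hk
    obtain ⟨hk0, hkn⟩ := mem_Ioc.1 hk
    rw [eval_mul, eval_C, eval_pow, eval_add, eval_X, eval_C, Nat.cast_sub hkn,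
      show -(n : R) + (n - k) = -1 * k by ring, mul_pow, ← pow_sub_mul_pow (k : R) (by omega :
        k - 1 ≤ n - 1), show n - 1 - (k - 1) = n - k by omega]
    ring
  have hfull := sum_range_neg_one_pow_mul_choose_mul_pow_eq_zero (R := R) (by omega : n - 1 < n)
  rw [Nat.range_succ_eq_Icc_zero, Icc_eq_cons_Ioc n.zero_le, sum_cons, Nat.cast_zero,
    zero_pow (by omega), mul_zero, zero_add] at hfull
  rw [abelSum, eval_finsetSum, sum_congr rfl hterm, hfull]

theorem abelSum_eq [IsAddTorsionFree R] (n : ℕ) :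
    (abelSum n : R[X]) = C (n : R) * (X + C (n : R)) ^ (n - 1) := by
  induction n with
  | zero => simp [abelSum]
  | succ n ih =>
    refine eq_of_derivative_eq_of_eval_eq (-(n + 1 : ℕ)) ?_ ?_
    · rw [derivative_abelSum_succ, ih, derivative_C_mul, derivative_X_add_C_pow, mul_comp, C_comp,
        pow_comp, add_comp, X_comp, C_comp]
      simp only [map_natCast, Nat.cast_succ, map_add, map_one, Nat.add_sub_cancel]
      ring
    · rcases Nat.eq_zero_or_pos n with rfl | hn
      · simp [abelSum]
      · rw [eval_neg_abelSum (by omega)]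
        simp [zero_pow (Nat.pos_iff_ne_zero.1 hn)]

end Abel

theorem sum_Ioc_choose_mul_pow_mul_pow (n : ℕ) :
    ∑ k ∈ Ioc 0 n, n.choose k * k ^ (k - 1) * (n - k) ^ (n - k) = n * n ^ (n - 1) := by
  have h := congrArg (eval 0) (abelSum_eq (R := ℤ) n)
  simp only [abelSum, eval_finsetSum, eval_mul, eval_C, eval_pow, eval_add, eval_X, zero_add] at h
  exact_mod_cast h

theorem sum_Ioo_choose_mul_pow_mul_pow {m : ℕ} (hm : 2 ≤ m) :
    ∑ a ∈ Ioo 0 m, m.choose a * a ^ (a - 1) * (m - a) ^ (m - a - 1) =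
      2 * (m - 1) * m ^ (m - 2) := by
  have hS : ∑ a ∈ Ioo 0 m, m.choose a * a ^ (a - 1) * (m - a) ^ (m - a) + m ^ (m - 1) =
      m * m ^ (m - 1) := by
    rw [← sum_Ioc_choose_mul_pow_mul_pow, ← Ioo_insert_right (by omega : 0 < m),
      sum_insert right_notMem_Ioo]
    simp [add_comm]
  have hreflect : ∑ a ∈ Ioo 0 m, m.choose a * a ^ a * (m - a) ^ (m - a - 1) =
      ∑ a ∈ Ioo 0 m, m.choose a * a ^ (a - 1) * (m - a) ^ (m - a) := by
    rw [← sum_Ioo_reflect]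
    refine sum_congr rfl fun a ha => ?_
    obtain ⟨ha0, ham⟩ := mem_Ioo.1 ha
    rw [Nat.choose_symm ham.le, Nat.sub_sub_self ham.le]
    ring
  have hsplit : m * ∑ a ∈ Ioo 0 m, m.choose a * a ^ (a - 1) * (m - a) ^ (m - a - 1) =
      ∑ a ∈ Ioo 0 m, m.choose a * a ^ a * (m - a) ^ (m - a - 1) +
        ∑ a ∈ Ioo 0 m, m.choose a * a ^ (a - 1) * (m - a) ^ (m - a) := by
    rw [mul_sum, ← sum_add_distrib]
    refine sum_congr rfl fun a ha => ?_
    obtain ⟨ha0, ham⟩ := mem_Ioo.1 ha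
    rw [← pow_sub_one_mul ha0.ne', ← pow_sub_one_mul (Nat.sub_ne_zero_of_lt ham)]
    nth_rw 1 [← Nat.add_sub_of_le ham.le]
    ring
  obtain ⟨k, rfl⟩ := Nat.exists_eq_add_of_le' hm
  refine Nat.eq_of_mul_eq_mul_left (by omega : 0 < k + 2) ?_
  rw [hsplit, hreflect]
  simp only [Nat.add_sub_cancel, show k + 2 - 1 = k + 1 by omega, pow_succ] at hS ⊢
  nlinarith [hS]

theorem H01_eq_zero_of_not_dvd {r d : ℕ} (h : ¬ r ∣ d) : H01 r d = 0 :=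
  if_neg fun h' => h h'.1

theorem natCast_mul_H01_mul {r a : ℕ} (hr : 0 < r) (ha : 0 < a) :
    ((r * a : ℕ) : ℚ) * H01 r (r * a) = ((r * a : ℕ) : ℚ) ^ (a - 1) / a ! := by
  have hne : ((r * a : ℕ) : ℚ) ≠ 0 := by positivity
  rw [H01, if_pos ⟨dvd_mul_right r a, Nat.mul_pos hr ha⟩, Nat.mul_div_cancel_left a hr,
    ← Int.natCast_div, Nat.mul_div_cancel_left a hr, mul_div_assoc', ← zpow_one_add₀ hne,
    show 1 + ((a : ℤ) - 2) = ((a - 1 : ℕ) : ℤ) by omega, zpow_natCast]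

theorem natCast_mul_H01_mul_sub {r m a : ℕ} (hr : 0 < r) (ha0 : 0 < a) (ham : a < m) :
    ((r * a : ℕ) : ℚ) * H01 r (r * a) *
        (((r * m - r * a : ℕ) : ℚ) * H01 r (r * m - r * a)) =
      (r : ℚ) ^ (m - 2) / m ! *
        ((m.choose a * a ^ (a - 1) * (m - a) ^ (m - a - 1) : ℕ) : ℚ) := by
  rw [← Nat.mul_sub, natCast_mul_H01_mul hr ha0, natCast_mul_H01_mul hr (Nat.sub_pos_of_lt ham),
    show m - 2 = (a - 1) + (m - a - 1) by omega]
  push_cast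
  rw [Nat.cast_choose ℚ ham.le]
  field_simp
  ring

/-- The rescaled (0,1) cut-and-join recursion for orbifold Hurwitz numbers:
with `𝓗(d) = d · H₀,₁ʳ(d)` (vanishing when `r ∤ d`), for every `d` divisible
by `r` with `d > r`,
`(d/r - 1) 𝓗(d) = (1/2) d ∑_{α+β=d, α,β ≥ 1} 𝓗(α) 𝓗(β)`. -/
theorem orbifold_H01_cut_and_join (r : ℕ) (hr : 0 < r) (d : ℕ) (hdvd : r ∣ d)
    (hd : r < d) :
    ((d / r : ℕ) - 1 : ℚ) * ((d : ℚ) * H01 r d) =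
      (1 / 2) * (d : ℚ) *
        ∑ α ∈ Finset.Ioo 0 d,
          ((α : ℚ) * H01 r α) * (((d - α : ℕ) : ℚ) * H01 r (d - α)) := by
  obtain ⟨m, rfl⟩ := hdvd
  have hm : 2 ≤ m := Nat.lt_of_mul_lt_mul_left (a := r) (by simpa using hd)
  rw [sum_Ioo_mul_left_eq_of_not_dvd hr m fun α hα => by
      rw [H01_eq_zero_of_not_dvd hα, mul_zero, zero_mul],
    sum_congr rfl fun a ha => natCast_mul_H01_mul_sub hr (mem_Ioo.1 ha).1 (mem_Ioo.1 ha).2,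
    ← mul_sum, ← Nat.cast_sum, sum_Ioo_choose_mul_pow_mul_pow hm,
    natCast_mul_H01_mul hr (by omega), Nat.mul_div_cancel_left m hr]
  obtain ⟨k, rfl⟩ := Nat.exists_eq_add_of_le' hm
  simp only [Nat.add_sub_cancel, show k + 2 - 1 = k + 1 by omega]
  push_cast
  rw [mul_pow]
  field_simp
  ring
end
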